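/- arXiv:0902.4441 — 2 statements merged into one kernel-verified Lean document; each statement's English description precedes it below -/
import Mathlib

section
/- For every partition λ and every integer i ≥ 1, (λ')^{(i)} = (λ^{(−i)})', where λ' denotes the conjugate partition of λ. -/
open scoped BigOperators
open scoped Classical

namespace Paper

/-! ### Partitions

A partition `λ = (λ_1 ≥ λ_2 ≥ ⋯ ≥ λ_n > 0)` is encoded as the weakly decreasing,
eventually-zero function `f : ℕ → ℕ` with `f k = λ_{k+1}` (0-based indexing of parts,
parts beyond the length being `0`). -/

def IsPartition (f : ℕ → ℕ) : Prop :=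
  (∀ ⦃i j : ℕ⦄, i ≤ j → f j ≤ f i) ∧ ∃ N, ∀ k, N ≤ k → f k = 0

/-- `|λ|`, the size of the partition. -/
noncomputable def psize (f : ℕ → ℕ) : ℕ := ∑ᶠ k, f k

/-- `u_i(λ) = #{k ≥ 1 : λ_k ≥ i}`, the number of parts of `λ` that are at least `i`. -/
noncomputable def numParts (f : ℕ → ℕ) (i : ℕ) : ℕ := Nat.card {k | i ≤ f k}

/-- `l(λ)`, the number of (positive) parts. -/
noncomputable def plength (f : ℕ → ℕ) : ℕ := numParts f 1

/-- The conjugate partition: `λ'_i = #{k : λ_k ≥ i}` (0-based: `conj f i = λ'_{i+1}`). -/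
noncomputable def conj (f : ℕ → ℕ) : ℕ → ℕ := fun i => numParts f (i + 1)

/-- `λ^{(i)} = (λ_1 − 1, …, λ_j − 1, i − 1, λ_{j+1}, …, λ_n)` where `j = u_i(λ)` is the
unique index with `λ_j ≥ i > λ_{j+1}` (switch the `i`-th R of the code to U). -/
noncomputable def swR (f : ℕ → ℕ) (i : ℕ) : ℕ → ℕ := fun k =>
  if k < numParts f i then f k - 1
  else if k = numParts f i then i - 1
  else f (k - 1)

/-- `λ^{(−i)} = (λ_1 + 1, …, λ_{i−1} + 1, λ_{i+1}, λ_{i+2}, …)` (switch the `i`-th U of the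
code, from the right, to R). -/
def swU (f : ℕ → ℕ) (i : ℕ) : ℕ → ℕ := fun k =>
  if k + 1 < i then f k + 1 else f (k + 1)

/-! ### Strips, the sets `𝓡_{λ,μ}` and the signed counts `R_{λ,μ}` -/

/-- `λ − ν` is a vertical strip (at most one square per row); includes `ν ⊆ λ`. -/
def VStrip (f g : ℕ → ℕ) : Prop := ∀ k, g k ≤ f k ∧ f k ≤ g k + 1

/-- `μ − ν` is a horizontal strip (at most one square per column); includes `ν ⊆ μ`. -/
def HStrip (f g : ℕ → ℕ) : Prop := ∀ k, f (k + 1) ≤ g k ∧ g k ≤ f k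

/-- `𝓡_{λ,μ}`: partitions `ν` with `λ − ν` a vertical strip and `μ − ν` a horizontal strip. -/
def RSet (l m : ℕ → ℕ) : Set (ℕ → ℕ) :=
  {nu | IsPartition nu ∧ VStrip l nu ∧ HStrip m nu}

/-- `R_{λ,μ} = Σ_{ν ∈ 𝓡_{λ,μ}} (−1)^{|λ|−|ν|}` (zero when the set is empty). -/
noncomputable def Rnum (l m : ℕ → ℕ) : ℤ :=
  ∑ᶠ nu ∈ RSet l m, (-1 : ℤ) ^ (psize l - psize nu)

/-- The square in row `r`, column `c` (0-based) is a `λ`-ambiguous square of `μ`: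
it lies in both diagrams, is rightmost in its row of `λ` and bottommost in its column of `μ`. -/
def Ambiguous (l m : ℕ → ℕ) (r c : ℕ) : Prop :=
  c + 1 = l r ∧ m (r + 1) ≤ c ∧ c + 1 ≤ m r

/-- `μ` is a `λ`-survivor: `𝓡_{λ,μ}` is nonempty and `μ` has no `λ`-ambiguous squares. -/
def Survivor (l m : ℕ → ℕ) : Prop :=
  (RSet l m).Nonempty ∧ ∀ r c, ¬ Ambiguous l m r c

noncomputable section

/-! ### The algebra of symmetric functions

`Λ_ℚ = ℚ[p_1, p_2, …]` realized as `MvPolynomial ℕ ℚ`, the variable `X k`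
representing the power sum `p_{k+1}`. -/

abbrev SymAlg : Type := MvPolynomial ℕ ℚ

/-- The power sum `p_n` (with `p_0 = 1`). -/
def pp (n : ℕ) : SymAlg := if n = 0 then 1 else MvPolynomial.X (n - 1)

/-- `p_λ` for a multiset of parts. -/
def pMul (s : Multiset ℕ) : SymAlg := (s.map pp).prod

/-- `|Aut λ| = ∏_j f_j!` for a multiset with multiplicities `f_j`. -/
def autF (s : Multiset ℕ) : ℕ := (s.dedup.map fun v => (s.count v).factorial).prod

/-- `z_λ = ∏_j j^{f_j} f_j!`. -/
def zee (s : Multiset ℕ) : ℕ := s.prod * autF s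

/-- The complete symmetric function `h_n = Σ_{λ ⊢ n} z_λ^{-1} p_λ`
(equivalently, `Σ_n h_n t^n = exp Σ_{k≥1} p_k t^k / k`). -/
def hh (n : ℕ) : SymAlg :=
  ∑ P : Nat.Partition n, ((zee P.parts : ℚ)⁻¹) • pMul P.parts

/-- The elementary symmetric function `e_n = Σ_{λ ⊢ n} (−1)^{n−l(λ)} z_λ^{-1} p_λ`
(equivalently, `Σ_n e_n t^n = exp Σ_{k≥1} (−1)^{k−1} p_k t^k / k`). -/
def ee (n : ℕ) : SymAlg :=
  ∑ P : Nat.Partition n,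
    (((-1 : ℚ) ^ (n - Multiset.card P.parts)) * (zee P.parts : ℚ)⁻¹) • pMul P.parts

/-- `perp f g = f^⊥ g`: the adjoint of multiplication by `f` with respect to the Hall
inner product, given explicitly by substituting `p_n^⊥ = n ∂/∂p_n` multiplicatively in `f`. -/
def perp (f g : SymAlg) : SymAlg :=
  ∑ m ∈ f.support, ∑ m' ∈ g.support,
    (MvPolynomial.coeff m f * MvPolynomial.coeff m' g *
      m.prod fun k a => ((k + 1 : ℚ)) ^ a * ((m' k).descFactorial a : ℚ)) •
      (MvPolynomial.monomial (m' - m) (1 : ℚ))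

/-- The weight (degree in the `x`'s) of a `p`-monomial: `p_1^{a_1} p_2^{a_2} ⋯ ↦ Σ k a_k`. -/
def wtm (m : ℕ →₀ ℕ) : ℕ := m.sum fun k a => (k + 1) * a

/-- The maximal weight of a monomial of `f`. -/
def wt (f : SymAlg) : ℕ := f.support.sup wtm

/-- The Bernstein operator `B_n = Σ_{m ≥ 0, n+m ≥ 0} (−1)^m h_{n+m} e_m^⊥`
(the sum is finite on each `f`: terms with `m > wt f` act as zero, which justifies
the truncation). -/
def BOp (n : ℤ) (f : SymAlg) : SymAlg :=
  ∑ m ∈ Finset.range (wt f + 1),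
    if 0 ≤ n + (m : ℤ) then
      ((-1 : ℚ) ^ m) • (hh (n + (m : ℤ)).toNat * perp (ee m) f)
    else 0

/-- The adjoint Bernstein operator `B_n^⊥ = Σ_{m ≥ 0, n+m ≥ 0} (−1)^m e_m h_{n+m}^⊥`. -/
def BpOp (n : ℤ) (f : SymAlg) : SymAlg :=
  ∑ m ∈ Finset.range (wt f + (-n).toNat + 1),
    if 0 ≤ n + (m : ℤ) then
      ((-1 : ℚ) ^ m) • (ee m * perp (hh (n + (m : ℤ)).toNat) f)
    else 0

/-- The involution `ω` of `Λ_ℚ` (with `ω e_n = h_n`); on power sums,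
`ω p_n = (−1)^{n−1} p_n`. -/
def omegaMap : SymAlg →ₐ[ℚ] SymAlg :=
  MvPolynomial.aeval fun k => ((-1 : ℚ) ^ k) • MvPolynomial.X k

/-- `h_k` for integer index, vanishing for `k < 0`. -/
def hz (k : ℤ) : SymAlg := if k < 0 then 0 else hh k.toNat

/-- The Schur function `s_λ`, via the Jacobi–Trudi determinant
`s_λ = det(h_{λ_i − i + j})_{1 ≤ i,j ≤ l(λ)}`. -/
def schur (f : ℕ → ℕ) : SymAlg :=
  Matrix.det (Matrix.of fun i j : Fin (plength f) =>
    hz ((f i : ℤ) - (i : ℤ) + (j : ℤ)))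

/-! ### The graded completion of `Λ_ℚ`, as multivariate formal power series in the `p`'s -/

abbrev SymSeries : Type := MvPowerSeries ℕ ℚ

def coeffS (m : ℕ →₀ ℕ) (g : SymSeries) : ℚ := MvPowerSeries.coeff m g

/-- `f^⊥` acting on a formal series, coefficientwise. -/
def perpS (f : SymAlg) (g : SymSeries) : SymSeries := fun m'' =>
  ∑ m ∈ f.support,
    MvPolynomial.coeff m f * coeffS (m'' + m) g *
      m.prod fun k a => ((k + 1 : ℚ)) ^ a * (((m'' + m) k).descFactorial a : ℚ)

/-- `B_n = Σ_{m ≥ 0, n+m ≥ 0} (−1)^m h_{n+m} e_m^⊥` acting on the completion, defined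
coefficientwise (the term `m` contributes to the coefficient of a monomial `m''` only
when `n + m ≤ wtm m''`, which justifies the truncation). -/
def BS (n : ℤ) (g : SymSeries) : SymSeries := fun m'' =>
  ∑ m ∈ Finset.range (wtm m'' + (-n).toNat + 1),
    if 0 ≤ n + (m : ℤ) then
      ((-1 : ℚ) ^ m) *
        coeffS m'' (((hh (n + (m : ℤ)).toNat : SymAlg) : SymSeries) * perpS (ee m) g)
    else 0

/-- `B_n^⊥ = Σ_{m ≥ 0, n+m ≥ 0} (−1)^m e_m h_{n+m}^⊥` acting on the completion. -/
def BpS (n : ℤ) (g : SymSeries) : SymSeries := fun m'' =>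
  ∑ m ∈ Finset.range (wtm m'' + 1),
    if 0 ≤ n + (m : ℤ) then
      ((-1 : ℚ) ^ m) *
        coeffS m'' (((ee m : SymAlg) : SymSeries) * perpS (hh (n + (m : ℤ)).toNat) g)
    else 0

/-- The formal sum `Σ_{λ ∈ 𝒫} a_λ s_λ` (each coefficient is a genuinely finite sum,
since only the finitely many partitions of `wtm m` contribute at a monomial `m`). -/
def schurSeries (a : (ℕ → ℕ) → ℚ) : SymSeries := fun m =>
  ∑ᶠ f : ℕ → ℕ, if IsPartition f then a f * MvPolynomial.coeff m (schur f) else 0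

/-! ### Two independent families of power sums `p`, `p̂`, for the KP bilinear identity.
Here `X (Sum.inl k) = p_{k+1}` and `X (Sum.inr k) = p̂_{k+1}`. -/

abbrev BiSeries : Type := MvPowerSeries (ℕ ⊕ ℕ) ℚ

def coeffB (m : (ℕ ⊕ ℕ) →₀ ℕ) (g : BiSeries) : ℚ := MvPowerSeries.coeff m g

/-- `τ(p)`: a series in the `p`'s viewed inside the two-variable-family algebra. -/
def liftL (g : SymSeries) : BiSeries := fun m =>
  if ∀ v ∈ m.support, Sum.isLeft v = true then
    coeffS (Finsupp.comapDomain Sum.inl m Sum.inl_injective.injOn) g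
  else 0

/-- `τ(p̂)`: a series in the `p̂`'s viewed inside the two-variable-family algebra. -/
def liftR (g : SymSeries) : BiSeries := fun m =>
  if ∀ v ∈ m.support, Sum.isRight v = true then
    coeffS (Finsupp.comapDomain Sum.inr m Sum.inr_injective.injOn) g
  else 0

/-- Formal partial derivative `∂/∂X_v` on the two-family power series algebra. -/
def DV (v : ℕ ⊕ ℕ) (g : BiSeries) : BiSeries := fun m =>
  ((m v : ℚ) + 1) * coeffB (m + Finsupp.single v 1) g

/-- `∂/∂p_i − ∂/∂p̂_i` (for `i ≥ 1`). -/
def dd (i : ℕ) (g : BiSeries) : BiSeries :=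
  DV (Sum.inl (i - 1)) g - DV (Sum.inr (i - 1)) g

/-- Composition of the commuting operators `∂/∂p_i − ∂/∂p̂_i` over a list of indices. -/
def dProd (s : List ℕ) : BiSeries → BiSeries := s.foldr (fun i F => dd i ∘ F) id

/-- The coefficient of `y^n` in `exp(−Σ_{k≥1} y^k (∂/∂p_k − ∂/∂p̂_k))`, namely
`Σ_{λ ⊢ n} (−1)^{l(λ)} (∏_j f_j!)^{-1} ∏_i (∂/∂p_{λ_i} − ∂/∂p̂_{λ_i})`. -/
def DD (n : ℕ) (g : BiSeries) : BiSeries :=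
  ∑ P : Nat.Partition n,
    (((-1 : ℚ) ^ (Multiset.card P.parts)) * ((autF P.parts : ℚ))⁻¹) •
      dProd (P.parts.sort (· ≤ ·)) g

/-- The coefficient of `t^n` in `exp(Σ_{k≥1} (t^k/k)(p_k − p̂_k))`, namely
`Σ_{λ ⊢ n} z_λ^{-1} ∏_i (p_{λ_i} − p̂_{λ_i})`. -/
def GG (n : ℕ) : MvPolynomial (ℕ ⊕ ℕ) ℚ :=
  ∑ P : Nat.Partition n,
    ((zee P.parts : ℚ)⁻¹) •
      (P.parts.map fun i =>
        (MvPolynomial.X (Sum.inl (i - 1)) - MvPolynomial.X (Sum.inr (i - 1)) :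
          MvPolynomial (ℕ ⊕ ℕ) ℚ)).prod

def wtB (m : (ℕ ⊕ ℕ) →₀ ℕ) : ℕ := m.sum fun v a => (Sum.elim (· + 1) (· + 1) v) * a

def wtL (m : (ℕ ⊕ ℕ) →₀ ℕ) : ℕ := m.sum fun v a => (Sum.elim (· + 1) (fun _ => 0) v) * a

def wtR (m : (ℕ ⊕ ℕ) →₀ ℕ) : ℕ := m.sum fun v a => (Sum.elim (fun _ => 0) (· + 1) v) * a

/-- The left-hand side
`[t^{-1}] exp(Σ_{k≥1} (t^k/k)(p_k − p̂_k)) exp(−Σ_{k≥1} t^{-k}(∂/∂p_k − ∂/∂p̂_k)) τ(p) τ(p̂)`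
of the KP bilinear equation, i.e. `Σ_{n≥0} G_n · D_{n+1} (τ(p)τ(p̂))`, defined
coefficientwise (only `n ≤ wtB m` contributes at a monomial `m`, since `G_n` is
homogeneous of weight `n`). -/
def KPLHS (tau : SymSeries) : BiSeries := fun m =>
  ∑ n ∈ Finset.range (wtB m + 1),
    coeffB m (((GG n : MvPolynomial (ℕ ⊕ ℕ) ℚ) : BiSeries) *
      DD (n + 1) (liftL tau * liftR tau))

/-- `τ` is a `τ`-function for the KP hierarchy: it satisfies the KP bilinear equation. -/
def IsTau (tau : SymSeries) : Prop := KPLHS tau = 0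

/-- `[t^{-1}] (B(t) τ(p)) · (B̂^⊥(t^{-1}) τ(p̂)) = Σ_{n ∈ ℤ} (B_n τ)(p) · (B̂^⊥_{n+1} τ)(p̂)`,
defined coefficientwise (at a monomial `m` only `−wtR m − 1 ≤ n ≤ wtL m` contributes,
which justifies the truncation; `n = j − wtR m − 1`). -/
def prodRHS (tau : SymSeries) : BiSeries := fun m =>
  ∑ j ∈ Finset.range (wtL m + wtR m + 2),
    coeffB m (liftL (BS ((j : ℤ) - (wtR m : ℤ) - 1) tau) *
      liftR (BpS ((j : ℤ) - (wtR m : ℤ)) tau))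

/-! ### The Plücker relations -/

/-- The condition on `ℓ` in the classical Plücker relations: `0 ≤ ℓ ≤ m − 1` and
`α_ℓ − 1 ≥ β_{k+1} − k + ℓ + 1 ≥ α_{ℓ+1}` (1-based, conventions `α_0 = ∞`, `α_m = −∞`)
and `β_{k+1} − k + ℓ + 1 ≥ 0`. -/
def PCond (m : ℕ) (α β : ℕ → ℕ) (k ℓ : ℕ) : Prop :=
  ℓ + 1 ≤ m ∧
  (ℓ = 0 ∨ ((β k : ℤ) - (k : ℤ) + ℓ + 1 ≤ (α (ℓ - 1) : ℤ) - 1)) ∧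
  (ℓ + 1 = m ∨ ((α ℓ : ℤ) ≤ (β k : ℤ) - (k : ℤ) + ℓ + 1)) ∧
  0 ≤ (β k : ℤ) - (k : ℤ) + ℓ + 1

/-- The term indexed by `k` in a classical Plücker relation:
`(−1)^{k−m+1+ℓ} a_{(α_1−1,…,α_ℓ−1, β_{k+1}−k+ℓ+1, α_{ℓ+1},…,α_{m−1})}
 · a_{(β_1+1,…,β_k+1, β_{k+2},…,β_{m+1})}`
for the unique admissible `ℓ` (identically `0` when no `ℓ` exists). -/
def cterm (a : (ℕ → ℕ) → ℚ) (m : ℕ) (α β : ℕ → ℕ) (k : ℕ) : ℚ :=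
  if h : ∃ ℓ : ℕ, PCond m α β k ℓ then
    ((-1 : ℚ) ^ ((k : ℤ) - (m : ℤ) + 1 + (h.choose : ℤ))) *
      a (fun t => if t < h.choose then α t - 1
          else if t = h.choose then ((β k : ℤ) - (k : ℤ) + h.choose + 1).toNat
          else α (t - 1)) *
      a (fun t => if t < k then β t + 1 else β (t + 1))
  else 0

/-- The classical Plücker relations for a family of scalars indexed by partitions. -/
def ClassicalPlucker (a : (ℕ → ℕ) → ℚ) : Prop :=
  ∀ m : ℕ, 1 ≤ m → ∀ α β : ℕ → ℕ, IsPartition α → IsPartition β →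
    plength α ≤ m - 1 → plength β ≤ m + 1 →
      ∑ k ∈ Finset.range (m + 1), cterm a m α β k = 0

/-- The symmetrical form of the Plücker relations:
for all partitions `α`, `β`,
`Σ_{i,j ≥ 1, |α^{(i)}|+|β^{(−j)}| = |α|+|β|+1} (−1)^{|α|−|α^{(i)}|+i+j} a_{α^{(i)}} a_{β^{(−j)}} = 0`. -/
def SymPlucker (a : (ℕ → ℕ) → ℚ) : Prop :=
  ∀ α β : ℕ → ℕ, IsPartition α → IsPartition β →
    (∑ᶠ (i : ℕ), ∑ᶠ (j : ℕ),
      if 1 ≤ i ∧ 1 ≤ j ∧ psize (swR α i) + psize (swU β j) = psize α + psize β + 1 then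
        ((-1 : ℚ) ^ ((psize α : ℤ) - (psize (swR α i) : ℤ) + (i : ℤ) + (j : ℤ))) *
          a (swR α i) * a (swU β j)
      else 0) = 0

end
end Paper


/-!
A partition `g` is the conjugate of `f` exactly when, for all `c` and `k`, the box in row `c`
and column `k` lies in the diagram of `g` iff the transposed box lies in that of `f`, i.e.
`k < g c ↔ c < f k`.
Since `λ'' = λ`, the distinguished index of `(λ')^{(i)}` is `u_i(λ') = λ_i`, and the box
criterion for `(λ')^{(i)}` against `λ^{(−i)}` becomes a case distinction on `c` versus `λ_i`
and `k` versus `i − 1`, settled by monotonicity of `λ`.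
-/

namespace Paper

variable {f : ℕ → ℕ}

lemma lt_numParts_iff (hf : IsPartition f) {j : ℕ} (hj : 1 ≤ j) (k : ℕ) :
    k < numParts f j ↔ j ≤ f k := by
  obtain ⟨hmono, N, hN⟩ := hf
  set m := sInf {k | f k < j}
  have hm : f m < j := Nat.sInf_mem (s := {k | f k < j}) ⟨N, by simp [hN N le_rfl]; omega⟩
  have hset : {k | j ≤ f k} = Set.Iio m := by
    ext k
    simp only [Set.mem_ofPred_eq, Set.mem_Iio]
    refine ⟨fun hk => lt_of_not_ge fun hle => ?_, fun hk => ?_⟩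
    · exact absurd (hmono hle) (by omega)
    · simpa using Nat.notMem_of_lt_sInf hk
  rw [numParts, hset, Nat.card_eq_card_toFinset, Set.toFinset_Iio, Nat.card_Iio, ← Set.mem_Iio,
    ← hset, Set.mem_ofPred_eq]

lemma lt_conj_iff (hf : IsPartition f) (c k : ℕ) : k < conj f c ↔ c < f k :=
  lt_numParts_iff hf (Nat.succ_pos c) k

lemma conj_isPartition (hf : IsPartition f) : IsPartition (conj f) := by
  refine ⟨fun c d hcd => ?_, f 0, fun c hc => ?_⟩
  · by_contra! h
    have := (lt_conj_iff hf d _).1 h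
    exact lt_irrefl _ ((lt_conj_iff hf c _).2 (by omega))
  · by_contra h
    have := (lt_conj_iff hf c 0).1 (Nat.pos_of_ne_zero h)
    omega

lemma conj_eq_of_forall_lt_iff {g : ℕ → ℕ} (hf : IsPartition f)
    (h : ∀ c k, k < g c ↔ c < f k) : conj f = g := by
  funext c
  have h₁ := (lt_conj_iff hf c (g c)).trans (h c (g c)).symm
  have h₂ := (lt_conj_iff hf c (conj f c)).trans (h c (conj f c)).symm
  omega

lemma conj_conj (hf : IsPartition f) : conj (conj f) = f :=
  conj_eq_of_forall_lt_iff (conj_isPartition hf) fun c k => (lt_conj_iff hf k c).symm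

lemma numParts_conj (hf : IsPartition f) {i : ℕ} (hi : 1 ≤ i) :
    numParts (conj f) i = f (i - 1) := by
  obtain ⟨j, rfl⟩ := Nat.exists_eq_add_of_le' hi
  exact congrFun (conj_conj hf) j

lemma swU_isPartition (hf : IsPartition f) (i : ℕ) : IsPartition (swU f i) := by
  obtain ⟨hmono, N, hN⟩ := hf
  refine ⟨fun k l hkl => ?_, N + i, fun k hk => ?_⟩
  · have h₁ := hmono hkl
    have h₂ := hmono (Nat.succ_le_succ hkl)
    have h₃ := hmono (show k ≤ l + 1 by omega)
    unfold swU
    split_ifs <;> omega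
  · simp only [swU, if_neg (show ¬k + 1 < i by omega)]
    exact hN _ (by omega)

lemma lt_swR_conj_iff (hf : IsPartition f) {i : ℕ} (hi : 1 ≤ i) (c k : ℕ) :
    k < swR (conj f) i c ↔ c < swU f i k := by
  have hk := lt_conj_iff hf (c - 1) k
  have hk₁ := lt_conj_iff hf c (k + 1)
  simp only [swR, swU, numParts_conj hf hi]
  by_cases hki : k + 1 < i
  · have h₁ := hf.1 (show k + 1 ≤ i - 1 by omega)
    have h₂ := hf.1 (show k ≤ k + 1 by omega)
    split_ifs <;> omega
  · have h₁ := hf.1 (show i - 1 ≤ k by omega)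
    have h₂ := hf.1 (show k ≤ k + 1 by omega)
    split_ifs <;> omega

end Paper

/-- For every partition `λ` and every `i ≥ 1`, `(λ')^{(i)} = (λ^{(−i)})'`. -/
theorem Paper.conj_swR_swU (f : ℕ → ℕ) (hf : Paper.IsPartition f) (i : ℕ) (hi : 1 ≤ i) :
    Paper.swR (Paper.conj f) i = Paper.conj (Paper.swU f i) :=
  (Paper.conj_eq_of_forall_lt_iff (Paper.swU_isPartition hf i)
    (Paper.lt_swR_conj_iff hf hi)).symm
end

section
/- Let λ and μ be partitions. If μ has a λ-ambiguous square — that is, a square contained in the diagrams of both λ and μ that is rightmost in its row of the diagram of λ and bottommost in its column of the diagram of μ — then R_{λ,μ} = 0. -/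
open scoped BigOperators
open scoped Classical

namespace Paper

/-!
The square `(r, c)` forces `ν_r ∈ {c, c + 1}` for every `ν ∈ 𝓡_{λ,μ}`, while the rows above
and below it leave room for either value. Toggling `ν_r` between `c` and `c + 1` is therefore a
fixed-point-free involution of `𝓡_{λ,μ}` that changes `|ν|` by one, so the signs cancel in pairs.
-/

theorem finsum_mem_eq_zero_of_involution {α G : Type*} [AddCommGroup G] [IsAddTorsionFree G]
    {s : Set α} {f : α → G} (σ : α → α) (hmaps : Set.MapsTo σ s s)
    (hinv : ∀ x ∈ s, σ (σ x) = x) (hneg : ∀ x ∈ s, f (σ x) = -f x) :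
    ∑ᶠ x ∈ s, f x = 0 := by
  have hbij : Set.BijOn σ s s := Set.InvOn.bijOn ⟨hinv, hinv⟩ hmaps hmaps
  have hself : ∑ᶠ x ∈ s, f x = -∑ᶠ x ∈ s, f x := by
    calc ∑ᶠ x ∈ s, f x = ∑ᶠ x ∈ s, -f (σ x) :=
          finsum_mem_congr rfl fun x hx => by rw [hneg x hx, neg_neg]
      _ = ∑ᶠ x ∈ s, -f x := finsum_mem_eq_of_bijOn σ hbij fun _ _ => rfl
      _ = -∑ᶠ x ∈ s, f x := by simp_rw [finsum_neg_distrib]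
  exact self_eq_neg.mp hself

theorem neg_one_pow_sub_eq_neg {L a b : ℕ} (ha : a ≤ L) (hb : b ≤ L) (hab : a = b + 1 ∨ b = a + 1) :
    (-1 : ℤ) ^ (L - a) = -(-1) ^ (L - b) := by
  rcases hab with rfl | rfl
  · rw [show L - b = L - (b + 1) + 1 by omega, pow_succ]
    ring
  · rw [show L - a = L - (a + 1) + 1 by omega, pow_succ]
    ring

section psize

variable {f g : ℕ → ℕ} {N : ℕ}

theorem psize_eq_sum_range (hf : ∀ k, N ≤ k → f k = 0) :
    psize f = ∑ k ∈ Finset.range N, f k := by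
  refine finsum_eq_finsetSum_of_support_subset f fun k hk => ?_
  by_contra hkN
  exact hk (hf k (by simpa using hkN))

theorem psize_le_psize (hle : ∀ k, f k ≤ g k) (hg : ∀ k, N ≤ k → g k = 0) :
    psize f ≤ psize g := by
  have hf : ∀ k, N ≤ k → f k = 0 := fun k hk => Nat.eq_zero_of_le_zero (hg k hk ▸ hle k)
  rw [psize_eq_sum_range hf, psize_eq_sum_range hg]
  exact Finset.sum_le_sum fun k _ => hle k

theorem psize_update_add {r : ℕ} (hf : ∀ k, N ≤ k → f k = 0) (hr : r < N) (a : ℕ) :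
    psize (Function.update f r a) + f r = psize f + a := by
  have hupd : ∀ k, N ≤ k → Function.update f r a k = 0 := fun k hk => by
    rw [Function.update_of_ne (by omega)]
    exact hf k hk
  have hrN : r ∈ Finset.range N := Finset.mem_range.mpr hr
  rw [psize_eq_sum_range hupd, psize_eq_sum_range hf, Finset.sum_update_of_mem hrN,
    Finset.sum_eq_sum_sdiff_singleton_add hrN]
  ring

end psize

theorem IsPartition.update {ν : ℕ → ℕ} (hν : IsPartition ν) {r a : ℕ}
    (hbefore : ∀ i < r, a ≤ ν i) (hafter : ∀ j, r < j → ν j ≤ a) :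
    IsPartition (Function.update ν r a) := by
  obtain ⟨hanti, N, hN⟩ := hν
  refine ⟨fun i j hij => ?_, max N (r + 1), fun k hk => ?_⟩
  · rcases eq_or_ne i r with rfl | hi <;> rcases eq_or_ne j i with rfl | hj
    · rfl
    · simpa [Function.update_of_ne hj] using hafter j (by omega)
    · rfl
    · rcases eq_or_ne j r with rfl | hjr
      · simpa [Function.update_of_ne hi] using hbefore i (by omega)
      · simpa [Function.update_of_ne hi, Function.update_of_ne hjr] using hanti hij
  · rw [Function.update_of_ne (by omega)]
    exact hN k (by omega)

theorem VStrip.update {f g : ℕ → ℕ} (h : VStrip f g) {r a : ℕ} (h₁ : a ≤ f r) (h₂ : f r ≤ a + 1) :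
    VStrip f (Function.update g r a) := fun k => by
  rcases eq_or_ne k r with rfl | hk
  · simpa using ⟨h₁, h₂⟩
  · simpa [Function.update_of_ne hk] using h k

theorem HStrip.update {f g : ℕ → ℕ} (h : HStrip f g) {r a : ℕ} (h₁ : f (r + 1) ≤ a)
    (h₂ : a ≤ f r) : HStrip f (Function.update g r a) := fun k => by
  rcases eq_or_ne k r with rfl | hk
  · simpa using ⟨h₁, h₂⟩
  · simpa [Function.update_of_ne hk] using h k

/-- When `ν r ∈ {c, c + 1}`, exchanges the two values. -/
def toggle (r c : ℕ) (ν : ℕ → ℕ) : ℕ → ℕ := Function.update ν r (2 * c + 1 - ν r)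

namespace Ambiguous

variable {l m ν : ℕ → ℕ} {r c : ℕ}

theorem apply_eq_or_eq (h : Ambiguous l m r c) (hν : VStrip l ν) : ν r = c ∨ ν r = c + 1 := by
  have := hν r
  have := h.1
  omega

theorem lt_apply_of_lt (h : Ambiguous l m r c) (hν : ν ∈ RSet l m) {i : ℕ} (hi : i < r) :
    c < ν i := by
  obtain ⟨⟨hanti, -⟩, -, hH⟩ := hν
  have hrow : m (r - 1 + 1) ≤ ν (r - 1) := (hH (r - 1)).1
  rw [Nat.sub_add_cancel (by omega)] at hrow
  have := hanti (show i ≤ r - 1 by omega)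
  have := h.2.2
  omega

theorem apply_le_of_lt (h : Ambiguous l m r c) (hν : ν ∈ RSet l m) {j : ℕ} (hj : r < j) :
    ν j ≤ c := by
  obtain ⟨⟨hanti, -⟩, -, hH⟩ := hν
  have := hanti (show r + 1 ≤ j by omega)
  have := (hH (r + 1)).2
  have := h.2.1
  omega

theorem toggle_mem_RSet (h : Ambiguous l m r c) (hν : ν ∈ RSet l m) :
    toggle r c ν ∈ RSet l m := by
  have hr := h.apply_eq_or_eq hν.2.1
  have := h.1
  have := h.2
  refine ⟨hν.1.update (fun i hi => ?_) (fun j hj => ?_), hν.2.1.update (by omega) (by omega),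
    hν.2.2.update (by omega) (by omega)⟩
  · have := h.lt_apply_of_lt hν hi
    omega
  · have := h.apply_le_of_lt hν hj
    omega

theorem toggle_toggle (h : Ambiguous l m r c) (hν : VStrip l ν) : toggle r c (toggle r c ν) = ν := by
  have hr := h.apply_eq_or_eq hν
  ext k
  rcases eq_or_ne k r with rfl | hk
  · simp only [toggle, Function.update_self]
    omega
  · simp [toggle, Function.update_of_ne hk]

theorem sign_toggle (h : Ambiguous l m r c) (hl : IsPartition l) (hν : ν ∈ RSet l m) :
    (-1 : ℤ) ^ (psize l - psize (toggle r c ν)) = -(-1) ^ (psize l - psize ν) := by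
  obtain ⟨N, hN⟩ := hl.2
  obtain ⟨M, hM⟩ := hν.1.2
  have hsize := psize_update_add (N := max M (r + 1)) (r := r) (fun k hk => hM k (by omega))
    (by omega) (2 * c + 1 - ν r)
  have hle := psize_le_psize (fun k => (hν.2.1 k).1) hN
  have hle' := psize_le_psize (fun k => ((h.toggle_mem_RSet hν).2.1 k).1) hN
  have hr := h.apply_eq_or_eq hν.2.1
  refine neg_one_pow_sub_eq_neg hle' hle ?_
  unfold toggle at hle' ⊢
  omega

end Ambiguous

end Paper

theorem Paper.Rnum_eq_zero_of_ambiguous_general (l m : ℕ → ℕ)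
    (hl : Paper.IsPartition l)
    (h : ∃ r c, Paper.Ambiguous l m r c) :
    Paper.Rnum l m = 0 := by
  obtain ⟨r, c, hamb⟩ := h
  exact Paper.finsum_mem_eq_zero_of_involution (Paper.toggle r c)
    (fun _ hν => hamb.toggle_mem_RSet hν) (fun _ hν => hamb.toggle_toggle hν.2.1)
    (fun _ hν => hamb.sign_toggle hl hν)

/-- If `μ` has a `λ`-ambiguous square, then `R_{λ,μ} = 0`. -/
theorem Paper.Rnum_eq_zero_of_ambiguous (l m : ℕ → ℕ)
    (hl : Paper.IsPartition l) (hm : Paper.IsPartition m)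
    (h : ∃ r c, Paper.Ambiguous l m r c) :
    Paper.Rnum l m = 0 :=
  Paper.Rnum_eq_zero_of_ambiguous_general l m hl h
end
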